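/- Let Δ̃(x,t) be the formal power series in t with Δ̃(x,0) = 1 and Δ̃² = (1 − t·x^{-1}(1+x)²)² − 4t²·x^{-1}(1+x)². Then CT_x [((1−x)/(1+x))·Δ̃(x,t)] = 1, where (1−x)/(1+x) is expanded as a power series in x. -/

import Mathlib

open PowerSeries

/-- The Laurent series `x` in `ℚ((x))`. -/
noncomputable def xL : LaurentSeries ℚ := HahnSeries.single 1 1

/-- `u = x⁻¹(1+x)² = x⁻¹ + 2 + x`. -/
noncomputable def uL : LaurentSeries ℚ := xL⁻¹ * (1 + xL) ^ 2

/-- `Δ̃(x,t)` is the power series in `t` with coefficients in `ℚ((x))` such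
that `Δ̃(x,0) = 1` and `Δ̃² = (1 − ut)² − 4ut²` where `u = x⁻¹(1+x)²`. -/
def IsDeltaH (Δ : PowerSeries (LaurentSeries ℚ)) : Prop :=
  constantCoeff Δ = 1 ∧
  Δ ^ 2 = (1 - C uL * X) ^ 2 - 4 * C uL * X ^ 2

/-!
Every `t`-coefficient of `Δ̃` is a polynomial in `u`: `Δ̃` is the image of the square root
`D ∈ ℚ[U]⟦t⟧` of `F = (1 - U t)² - 4 U t²`, obtained by substituting `F - 1` into the binomial
series of `(1 + X)^(1/2)`, because a square root with constant term `1` is unique as soon as `2`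
is invertible. On `ℚ[U]` the functional `P ↦ CT_x [(1 - x)/(1 + x) · P(u)]` is evaluation at
`U = 0`: for `k ≥ 1`, `(1 - x)/(1 + x) · u^k = x^(-k) (1 - x)(1 + x)^(2k-1)`, whose constant
term `C(2k-1, k) - C(2k-1, k-1)` vanishes. So the answer is the `t`-expansion of `D` at `U = 0`,
a square root of `1` with constant term `1`, that is `1` itself.
-/

namespace PowerSeries

section CommRing

variable {R S : Type*} [CommRing R] [CommRing S]

theorem constantCoeff_map (f : R →+* S) (φ : R⟦X⟧) :
    constantCoeff (map f φ) = f (constantCoeff φ) := by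
  rw [← coeff_zero_eq_constantCoeff_apply, coeff_map, coeff_zero_eq_constantCoeff_apply]

theorem eq_of_sq_eq_sq_of_constantCoeff_eq_one (h2 : IsUnit (2 : R)) {D E : R⟦X⟧}
    (hD : constantCoeff D = 1) (hE : constantCoeff E = 1) (h : D ^ 2 = E ^ 2) : D = E := by
  have hunit : IsUnit (D + E) := by
    rw [isUnit_iff_constantCoeff, map_add, hD, hE, one_add_one_eq_two]
    exact h2
  have hprod : (D - E) * (D + E) = 0 := by linear_combination h
  exact sub_eq_zero.mp (hunit.mul_left_eq_zero.mp hprod)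

theorem constantCoeff_subst_of_constantCoeff_eq_zero {a f : R⟦X⟧} (ha : constantCoeff a = 0) :
    constantCoeff (f.subst a) = constantCoeff f := by
  have hf : f = (f - C (constantCoeff f)) + C (constantCoeff f) := (sub_add_cancel _ _).symm
  nth_rw 1 [hf]
  have h0 : constantCoeff ((f - C (constantCoeff f)).subst a) = 0 :=
    constantCoeff_subst_eq_zero ha _ (by simp)
  rw [subst_add (HasSubst.of_constantCoeff_zero' ha), subst_C, map_add, h0, zero_add]
  exact MvPowerSeries.constantCoeff_C _

theorem exists_sq_eq_of_constantCoeff_eq_one [Algebra ℚ R] {F : R⟦X⟧}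
    (hF : constantCoeff F = 1) : ∃ D : R⟦X⟧, constantCoeff D = 1 ∧ D ^ 2 = F := by
  have hF1 : constantCoeff (F - 1) = 0 := by simp [hF]
  have hsub : HasSubst (F - 1) := HasSubst.of_constantCoeff_zero' hF1
  refine ⟨(binomialSeries R (2⁻¹ : ℚ)).subst (F - 1), ?_, ?_⟩
  · rw [constantCoeff_subst_of_constantCoeff_eq_zero hF1, binomialSeries_constantCoeff]
  · rw [← subst_pow hsub, sq, ← binomialSeries_add,
      show (2⁻¹ + 2⁻¹ : ℚ) = (1 : ℕ) by norm_num, binomialSeries_nat, pow_one,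
      subst_add hsub, subst_X hsub, ← map_one C, subst_C]
    simp

end CommRing

theorem coeff_one_add_X_pow {R : Type*} [Semiring R] (n k : ℕ) :
    coeff k ((1 + X : R⟦X⟧) ^ n) = n.choose k := by
  have hcoe : (((1 + Polynomial.X) ^ n : Polynomial R) : R⟦X⟧) = (1 + X) ^ n := by
    simp
  rw [← hcoe, Polynomial.coeff_coe, Polynomial.coeff_one_add_X_pow]

end PowerSeries

theorem isUnit_two_of_algebra_rat {A : Type*} [Semiring A] [Algebra ℚ A] : IsUnit (2 : A) := by
  rw [← map_ofNat (algebraMap ℚ A) 2]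
  exact (isUnit_of_invertible _).map _

theorem HahnSeries.coeff_zero_single_neg_mul_ofPowerSeries {R : Type*} [Semiring R] (k : ℕ)
    (f : R⟦X⟧) :
    (single (-(k : ℤ)) (1 : R) * ofPowerSeries ℤ R f).coeff 0 = PowerSeries.coeff k f := by
  rw [show (0 : ℤ) = k + -k by simp, coeff_single_mul_add, one_mul,
    LaurentSeries.coeff_coe_powerSeries]

theorem xL_eq_ofPowerSeries_X : xL = HahnSeries.ofPowerSeries ℤ ℚ X :=
  HahnSeries.ofPowerSeries_X.symm

theorem uL_pow_eq_single_mul_ofPowerSeries (k : ℕ) :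
    uL ^ k =
      HahnSeries.single (-(k : ℤ)) 1 * HahnSeries.ofPowerSeries ℤ ℚ ((1 + X) ^ (2 * k)) := by
  have hinv : xL⁻¹ = HahnSeries.single (-1) 1 :=
    inv_eq_of_mul_eq_one_right (by rw [xL, HahnSeries.single_mul_single]; simp)
  rw [uL, mul_pow, hinv, HahnSeries.single_pow, one_pow, ← pow_mul, xL_eq_ofPowerSeries_X,
    ← map_one (HahnSeries.ofPowerSeries ℤ ℚ), ← map_add, ← map_pow, mul_comm 2 k]
  simp

noncomputable def oneSubXDivOneAddX : ℚ⟦X⟧ := (1 - X) * (1 + X)⁻¹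

theorem one_add_X_mul_oneSubXDivOneAddX : (1 + X) * oneSubXDivOneAddX = 1 - X := by
  rw [oneSubXDivOneAddX, mul_left_comm, PowerSeries.mul_inv_cancel _ (by simp), mul_one]

theorem ofPowerSeries_oneSubXDivOneAddX :
    HahnSeries.ofPowerSeries ℤ ℚ oneSubXDivOneAddX = (1 - xL) / (1 + xL) := by
  have hne : 1 + xL ≠ 0 := by
    rw [xL_eq_ofPowerSeries_X, ← map_one (HahnSeries.ofPowerSeries ℤ ℚ), ← map_add, Ne,
      map_eq_zero_iff _ HahnSeries.ofPowerSeries_injective]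
    exact fun h => by simpa using congrArg constantCoeff h
  rw [eq_div_iff hne, mul_comm, xL_eq_ofPowerSeries_X,
    ← map_one (HahnSeries.ofPowerSeries ℤ ℚ), ← map_add, ← map_mul,
    one_add_X_mul_oneSubXDivOneAddX, map_sub]

theorem coeff_zero_div_mul_uL_pow (k : ℕ) :
    ((1 - xL) / (1 + xL) * uL ^ k).coeff 0 = if k = 0 then 1 else 0 := by
  rw [← ofPowerSeries_oneSubXDivOneAddX, uL_pow_eq_single_mul_ofPowerSeries, mul_left_comm,
    ← map_mul, HahnSeries.coeff_zero_single_neg_mul_ofPowerSeries]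
  rcases k with _ | m
  · simp [oneSubXDivOneAddX]
  · rw [show 2 * (m + 1) = (2 * m + 1) + 1 by ring, pow_succ', ← mul_assoc,
      mul_comm oneSubXDivOneAddX, one_add_X_mul_oneSubXDivOneAddX, sub_mul, one_mul, map_sub,
      coeff_succ_X_mul, coeff_one_add_X_pow, coeff_one_add_X_pow, Nat.choose_symm_half]
    simp

theorem coeff_zero_div_mul_aeval_uL (P : Polynomial ℚ) :
    ((1 - xL) / (1 + xL) * Polynomial.aeval uL P).coeff 0 = P.eval 0 := by
  induction P using Polynomial.induction_on' with
  | add P Q hP hQ => rw [map_add, mul_add, HahnSeries.coeff_add, hP, hQ, Polynomial.eval_add]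
  | monomial k a =>
    rw [Polynomial.aeval_monomial, mul_left_comm, LaurentSeries.algebraMap_apply,
      HahnSeries.C_mul_eq_smul, HahnSeries.coeff_smul, smul_eq_mul, coeff_zero_div_mul_uL_pow,
      Polynomial.eval_monomial]
    rcases k with _ | k <;> simp

noncomputable def deltaSqSeries {R : Type*} [CommRing R] (u : R) : R⟦X⟧ :=
  (1 - C u * X) ^ 2 - 4 * C u * X ^ 2

section deltaSqSeries

variable {R S : Type*} [CommRing R] [CommRing S]

theorem constantCoeff_deltaSqSeries (u : R) : constantCoeff (deltaSqSeries u) = 1 := by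
  simp [deltaSqSeries]

theorem deltaSqSeries_zero : deltaSqSeries (0 : R) = 1 := by
  simp [deltaSqSeries]

theorem map_deltaSqSeries (f : R →+* S) (u : R) :
    map f (deltaSqSeries u) = deltaSqSeries (f u) := by
  simp [deltaSqSeries, map_ofNat]

end deltaSqSeries

/-- `CT_x ((1−x)/(1+x) · Δ̃) = 1`, coefficientwise in `t`. -/
theorem stmt19 (Δ : PowerSeries (LaurentSeries ℚ)) (hΔ : IsDeltaH Δ) (n : ℕ) :
    ((coeff n) (C ((1 - xL) / (1 + xL)) * Δ)).coeff 0
      = if n = 0 then 1 else 0 := by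
  obtain ⟨D, hD0, hD⟩ := exists_sq_eq_of_constantCoeff_eq_one
    (constantCoeff_deltaSqSeries (Polynomial.X : Polynomial ℚ))
  have hΔD : Δ = map (Polynomial.aeval uL).toRingHom D := by
    refine eq_of_sq_eq_sq_of_constantCoeff_eq_one isUnit_two_of_algebra_rat hΔ.1
      (by rw [constantCoeff_map, hD0, map_one]) ?_
    rw [hΔ.2, ← map_pow, hD, map_deltaSqSeries]
    simp [deltaSqSeries]
  have hD1 : map (Polynomial.evalRingHom 0) D = 1 := by
    refine eq_of_sq_eq_sq_of_constantCoeff_eq_one isUnit_two_of_algebra_rat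
      (by rw [constantCoeff_map, hD0, map_one]) (map_one _) ?_
    rw [← map_pow, hD, map_deltaSqSeries, Polynomial.coe_evalRingHom, Polynomial.eval_X,
      deltaSqSeries_zero, one_pow]
  rw [coeff_C_mul, hΔD, coeff_map, AlgHom.toRingHom_eq_coe, RingHom.coe_coe,
    coeff_zero_div_mul_aeval_uL, ← Polynomial.coe_evalRingHom, ← coeff_map, hD1, coeff_one]
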